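/- arXiv:2003.11185 — 3 statements merged into one kernel-verified Lean document; each statement's English description precedes it below -/
import Mathlib

section
/- Let u be a locally integrable function on ℝ² that is continuous at a point x₀ ∈ ℝ², let r > 0 and κ ∈ (0,1). For ρ > 0 set a(ρ) := ⨍_{B(x₀,ρ)} u and φ(ρ) := ⨍_{B(x₀,ρ)} |u − a(ρ)|. If ∑_{j=0}^∞ φ(κ^j r) < ∞, then |u(x₀) − a(r)| ≤ (1 + κ^{-2}) ∑_{j=0}^∞ φ(κ^j r). -/
/-!
Shrinking a ball by the factor `κ` moves the average of `u` by at most `κ⁻²` times the mean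
oscillation on the larger ball: by Jensen, `|a(κρ) - a(ρ)|` is at most the average of
`|u - a(ρ)|` over the small ball, and enlarging the domain of integration costs the ratio of
the areas. Hence the averages `a(κʲ r)` have increments bounded by `κ⁻² φ(κʲ r)`; they converge
to `u(x₀)` by continuity, so `|u(x₀) - a(r)|` is at most the sum of these bounds.
-/

open MeasureTheory Metric Filter Topology Module

section Average

variable {α F : Type*} [MeasurableSpace α] {μ : Measure α}
  [NormedAddCommGroup F] [NormedSpace ℝ F] [CompleteSpace F]

theorem norm_setAverage_sub_le {s : Set α} {f : α → F} (hs₀ : μ s ≠ 0) (hs : μ s ≠ ⊤)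
    (hf : IntegrableOn f s μ) (c : F) :
    ‖⨍ x in s, f x ∂μ - c‖ ≤ ⨍ x in s, ‖f x - c‖ ∂μ := by
  have hconv : ConvexOn ℝ Set.univ fun y : F => ‖y - c‖ := by
    simpa [Function.comp_def, sub_eq_neg_add] using convexOn_univ_norm.translate_right (-c)
  exact hconv.map_set_average_le (continuous_norm.comp (continuous_sub_right c)).continuousOn
    isClosed_univ hs₀ hs (ae_of_all _ fun _ => Set.mem_univ _) hf
    (hf.sub (integrableOn_const hs)).norm

theorem setAverage_le_div_mul_setAverage_of_subset {s t : Set α} {g : α → ℝ} (hst : s ⊆ t)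
    (ht₀ : μ t ≠ 0) (ht : μ t ≠ ⊤) (hg : IntegrableOn g t μ) (hg₀ : 0 ≤ᵐ[μ.restrict t] g) :
    ⨍ x in s, g x ∂μ ≤ μ.real t / μ.real s * ⨍ x in t, g x ∂μ := by
  have ht_pos : 0 < μ.real t := ENNReal.toReal_pos ht₀ ht
  rw [setAverage_eq, setAverage_eq, smul_eq_mul, smul_eq_mul, div_mul_eq_mul_div,
    mul_inv_cancel_left₀ ht_pos.ne', div_eq_inv_mul]
  exact mul_le_mul_of_nonneg_left (setIntegral_mono_set hg hg₀ (ae_of_all _ hst)) (by positivity)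

end Average

theorem ContinuousAt.tendsto_setAverage_ball {X F : Type*} [PseudoMetricSpace X] [ProperSpace X]
    [MeasurableSpace X] [OpensMeasurableSpace X] {μ : Measure X} [μ.IsOpenPosMeasure]
    [IsFiniteMeasureOnCompacts μ]
    [NormedAddCommGroup F] [NormedSpace ℝ F] [CompleteSpace F] {f : X → F} {x : X}
    (hf : ContinuousAt f x) (hfi : IntegrableAtFilter f (𝓝 x) μ) :
    Tendsto (fun ρ => ⨍ y in ball x ρ, f y ∂μ) (𝓝[>] 0) (𝓝 (f x)) := by
  refine nhds_basis_closedBall.tendsto_right_iff.2 fun ε hε => ?_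
  obtain ⟨s, hs, hfs⟩ := hfi
  obtain ⟨δ, hδ, hball⟩ := Metric.mem_nhds_iff.1 (inter_mem hs (hf (closedBall_mem_nhds _ hε)))
  filter_upwards [Ioo_mem_nhdsGT hδ] with ρ hρ
  have hsub : ball x ρ ⊆ ball x δ := ball_subset_ball hρ.2.le
  exact (convex_closedBall _ _).set_average_mem isClosed_closedBall
    (measure_ball_pos μ x hρ.1).ne' measure_ball_lt_top.ne
    ((ae_restrict_mem measurableSet_ball).mono fun y hy => (hball (hsub hy)).2)
    (hfs.mono_set fun y hy => (hball (hsub hy)).1)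

section AddHaar

variable {E F : Type*} [NormedAddCommGroup E] [NormedSpace ℝ E] [FiniteDimensional ℝ E]
  [MeasurableSpace E] [BorelSpace E] (μ : Measure E) [μ.IsAddHaarMeasure]
  [NormedAddCommGroup F] [NormedSpace ℝ F] [CompleteSpace F]

theorem measureReal_ball_div_measureReal_ball_mul (x : E) {κ ρ : ℝ} (hκ : 0 < κ) (hρ : 0 < ρ) :
    μ.real (ball x ρ) / μ.real (ball x (κ * ρ)) = κ⁻¹ ^ finrank ℝ E := by
  have hball : 0 < μ.real (ball x ρ) :=
    ENNReal.toReal_pos (measure_ball_pos μ x hρ).ne' measure_ball_lt_top.ne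
  rw [measureReal_def, measureReal_def, Measure.addHaar_ball_mul_of_pos μ x hκ,
    ← Measure.addHaar_ball_center μ x, ENNReal.toReal_mul, ENNReal.toReal_ofReal (by positivity),
    ← measureReal_def, div_mul_eq_div_div_swap, div_self hball.ne', one_div, inv_pow]

theorem norm_setAverage_ball_mul_sub_le {f : E → F} {x : E} {κ ρ : ℝ} (hκ₀ : 0 < κ) (hκ₁ : κ ≤ 1)
    (hρ : 0 < ρ) (hf : IntegrableOn f (ball x ρ) μ) (c : F) :
    ‖⨍ y in ball x (κ * ρ), f y ∂μ - c‖ ≤ κ⁻¹ ^ finrank ℝ E * ⨍ y in ball x ρ, ‖f y - c‖ ∂μ := by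
  have hsub : ball x (κ * ρ) ⊆ ball x ρ := ball_subset_ball (mul_le_of_le_one_left hρ.le hκ₁)
  calc ‖⨍ y in ball x (κ * ρ), f y ∂μ - c‖ ≤ ⨍ y in ball x (κ * ρ), ‖f y - c‖ ∂μ :=
        norm_setAverage_sub_le (measure_ball_pos μ x (mul_pos hκ₀ hρ)).ne'
          measure_ball_lt_top.ne (hf.mono_set hsub) c
    _ ≤ μ.real (ball x ρ) / μ.real (ball x (κ * ρ)) * ⨍ y in ball x ρ, ‖f y - c‖ ∂μ :=
        setAverage_le_div_mul_setAverage_of_subset hsub (measure_ball_pos μ x hρ).ne'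
          measure_ball_lt_top.ne (hf.sub (integrableOn_const measure_ball_lt_top.ne)).norm
          (ae_of_all _ fun _ => norm_nonneg _)
    _ = κ⁻¹ ^ finrank ℝ E * ⨍ y in ball x ρ, ‖f y - c‖ ∂μ := by
        rw [measureReal_ball_div_measureReal_ball_mul μ x hκ₀ hρ]

end AddHaar

theorem stmt_5 (u : EuclideanSpace ℝ (Fin 2) → ℝ)
    (hu : LocallyIntegrable u volume)
    (x₀ : EuclideanSpace ℝ (Fin 2)) (hcont : ContinuousAt u x₀)
    (r κ : ℝ) (hr : 0 < r) (hκ : κ ∈ Set.Ioo (0:ℝ) 1)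
    (a φ : ℝ → ℝ)
    (ha : ∀ ρ : ℝ, a ρ = ⨍ y in Metric.ball x₀ ρ, u y)
    (hφ : ∀ ρ : ℝ, φ ρ = ⨍ y in Metric.ball x₀ ρ, |u y - a ρ|)
    (hsum : Summable (fun j : ℕ => φ (κ ^ j * r))) :
    |u x₀ - a r| ≤ (1 + κ⁻¹ ^ 2) * ∑' j : ℕ, φ (κ ^ j * r) := by
  obtain ⟨hκ₀, hκ₁⟩ := hκ
  have hradius : ∀ n : ℕ, 0 < κ ^ n * r := fun n => mul_pos (pow_pos hκ₀ n) hr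
  have hstep : ∀ n : ℕ, dist (a (κ ^ n * r)) (a (κ ^ (n + 1) * r)) ≤ κ⁻¹ ^ 2 * φ (κ ^ n * r) := by
    intro n
    have := norm_setAverage_ball_mul_sub_le volume hκ₀ hκ₁.le (hradius n)
      (hu.integrableOn_isCompact (isCompact_closedBall x₀ _) |>.mono_set ball_subset_closedBall)
      (a (κ ^ n * r))
    simp only [Real.norm_eq_abs] at this
    rw [finrank_euclideanSpace_fin, ← ha, ← mul_assoc, ← pow_succ'] at this
    rwa [dist_comm, Real.dist_eq, hφ]
  have hlim : Tendsto (fun n : ℕ => a (κ ^ n * r)) atTop (𝓝 (u x₀)) := by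
    simp only [ha]
    refine (hcont.tendsto_setAverage_ball (hu x₀)).comp (tendsto_nhdsWithin_iff.2 ⟨?_, ?_⟩)
    · simpa using (tendsto_pow_atTop_nhds_zero_of_lt_one hκ₀.le hκ₁).mul_const r
    · exact Eventually.of_forall hradius
  have hφ_nonneg : ∀ ρ, 0 ≤ φ ρ := fun ρ => by
    rw [hφ, setAverage_eq, smul_eq_mul]
    positivity
  calc |u x₀ - a r| = dist (a (κ ^ 0 * r)) (u x₀) := by
        rw [pow_zero, one_mul, Real.dist_eq, abs_sub_comm]
    _ ≤ ∑' n : ℕ, κ⁻¹ ^ 2 * φ (κ ^ n * r) :=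
        dist_le_tsum_of_dist_le_of_tendsto₀ _ hstep (hsum.mul_left _) hlim
    _ = κ⁻¹ ^ 2 * ∑' n : ℕ, φ (κ ^ n * r) := tsum_mul_left
    _ ≤ (1 + κ⁻¹ ^ 2) * ∑' n : ℕ, φ (κ ^ n * r) := by
        gcongr
        · exact tsum_nonneg fun n => hφ_nonneg _
        · linarith
end

section
/- There is an absolute constant C with the following property: let x ∈ ℝ², C₀ > 0, and let g : ℝ² \ {x} → ℝ satisfy |g(y) − g(y')| ≤ C₀ |y−y'| / |x−y| whenever y, y' ≠ x, |y−y'| ≤ (1/2)|x−y|, and |x−y| ≤ |x−y'|. Then for all y, y' ≠ x with |x−y| ≤ |x−y'|, one has |g(y) − g(y')| ≤ C C₀ |y−y'| / |x−y|. -/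
/-!
Points at distance at most `½|x - y|` apart are linked directly by the local estimate, each link
costing at most `C₀ / 2`. For a general pair `y, y'` with `|x - y| = r ≤ |x - y'|` and
`|y - y'| > r / 2`, go from `y` to the point `y''` of the circle of radius `r` on the ray through `y'`
by eight rotation steps, and then out along the ray to `y'` by steps of length `r / 2`; the second
leg has `O(|y - y'| / r)` links, so the whole chain costs `O(C₀ |y - y'| / r)`.
-/

open Complex

section MetricSpace

variable {α β : Type*} [MetricSpace α] [MetricSpace β]

def LocalGreenBound (x : α) (C₀ : ℝ) (g : α → ℝ) : Prop :=
  ∀ y y', y ≠ x → y' ≠ x → dist y y' ≤ 1 / 2 * dist x y → dist x y ≤ dist x y' →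
    |g y - g y'| ≤ C₀ * dist y y' / dist x y

def GreenBound (x : α) (C : ℝ) (g : α → ℝ) : Prop :=
  ∀ y y', y ≠ x → y' ≠ x → dist x y ≤ dist x y' → |g y - g y'| ≤ C * dist y y' / dist x y

lemma LocalGreenBound.comp_isometryEquiv {x : α} {C₀ : ℝ} {g : α → ℝ} (φ : β ≃ᵢ α) {x₀ : β}
    (hx₀ : φ x₀ = x) (H : LocalGreenBound x C₀ g) : LocalGreenBound x₀ C₀ (g ∘ φ) := by
  intro y y' hy hy'
  subst hx₀
  simpa only [Function.comp_apply, φ.dist_eq] using H (φ y) (φ y') (by simpa) (by simpa)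

lemma GreenBound.of_comp_isometryEquiv {x : α} {C : ℝ} {g : α → ℝ} (φ : β ≃ᵢ α) {x₀ : β}
    (hx₀ : φ x₀ = x) (H : GreenBound x₀ C (g ∘ φ)) : GreenBound x C g := by
  intro y y' hy hy'
  subst hx₀
  have := H (φ.symm y) (φ.symm y') (by simpa [φ.symm_apply_eq]) (by simpa [φ.symm_apply_eq])
  simpa only [Function.comp_apply, φ.apply_symm_apply, ← φ.dist_eq] using this

variable {x : α} {C₀ : ℝ} {g : α → ℝ}

lemma LocalGreenBound.abs_sub_le_half (H : LocalGreenBound x C₀ g) (hC₀ : 0 ≤ C₀) {y y' : α}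
    (hy : y ≠ x) (hstep : dist y y' ≤ 1 / 2 * dist x y) (hle : dist x y ≤ dist x y') :
    |g y - g y'| ≤ C₀ / 2 := by
  have hr : 0 < dist x y := dist_pos.2 hy.symm
  have hy' : y' ≠ x := by
    rintro rfl
    exact hy (dist_le_zero.1 (hle.trans_eq (dist_self _))).symm
  refine (H y y' hy hy' hstep hle).trans ?_
  rw [div_le_iff₀ hr]
  nlinarith

lemma LocalGreenBound.abs_sub_le_of_chain (H : LocalGreenBound x C₀ g) (hC₀ : 0 ≤ C₀)
    (w : ℕ → α) (hw₀ : w 0 ≠ x) (hmono : ∀ j, dist x (w j) ≤ dist x (w (j + 1)))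
    (hstep : ∀ j, dist (w j) (w (j + 1)) ≤ 1 / 2 * dist x (w j)) (n : ℕ) :
    |g (w 0) - g (w n)| ≤ n * (C₀ / 2) := by
  have hne : ∀ j, w j ≠ x := fun j hj => by
    have := monotone_nat_of_le_succ hmono (Nat.zero_le j)
    simp only [hj, dist_self] at this
    exact hw₀ (dist_le_zero.1 this).symm
  calc |g (w 0) - g (w n)| = dist (g (w 0)) (g (w n)) := (Real.dist_eq _ _).symm
    _ ≤ ∑ j ∈ Finset.range n, dist (g (w j)) (g (w (j + 1))) := dist_le_range_sum_dist (g ∘ w) n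
    _ ≤ (Finset.range n).card • (C₀ / 2) :=
      Finset.sum_le_card_nsmul _ _ _ fun j _ =>
        (H.abs_sub_le_half hC₀ (hne j) (hstep j) (hmono j)).trans_eq' (Real.dist_eq _ _)
    _ = n * (C₀ / 2) := by simp

end MetricSpace

section NormedSpace

variable {E : Type*} [NormedAddCommGroup E] [NormedSpace ℝ E] {C₀ : ℝ} {g : E → ℝ}

lemma LocalGreenBound.abs_sub_le_radial (H : LocalGreenBound (0 : E) C₀ g) (hC₀ : 0 ≤ C₀)
    {z : E} {r : ℝ} (hr : 0 < r) (hrz : r ≤ ‖z‖) :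
    |g ((r / ‖z‖) • z) - g z| ≤ C₀ * (‖z‖ / r - 1 / 2) := by
  set R := ‖z‖
  have hR : 0 < R := hr.trans_le hrz
  set a : ℕ → ℝ := fun j => min (r + j * (r / 2)) R
  have ha_ge : ∀ j, r ≤ a j := fun j => le_min (le_add_of_nonneg_right (by positivity)) hrz
  have hnorm : ∀ j, ‖(a j / R) • z‖ = a j := fun j => by
    rw [norm_smul_of_nonneg (div_nonneg (hr.le.trans (ha_ge j)) hR.le), div_mul_cancel₀ _ hR.ne']
  have hsucc : ∀ j, a j ≤ a (j + 1) ∧ a (j + 1) ≤ a j + r / 2 := fun j => by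
    simp only [a, Nat.cast_succ]
    constructor
    · gcongr; linarith
    · rw [min_le_iff]; by_cases h : r + j * (r / 2) ≤ R
      · left; rw [min_eq_left h]; linarith
      · right; rw [min_eq_right (not_le.1 h).le]; linarith
  set n := ⌈2 * (R - r) / r⌉₊
  have hn : (n : ℝ) ≤ 2 * (R - r) / r + 1 :=
    (Nat.ceil_lt_add_one (div_nonneg (by linarith) hr.le)).le
  have ha_n : a n = R := min_eq_right <| by
    have := Nat.le_ceil (2 * (R - r) / r)
    rw [div_le_iff₀ hr] at this
    linarith
  have hchain := H.abs_sub_le_of_chain hC₀ (fun j => (a j / R) • z)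
    (by rw [← norm_pos_iff, hnorm]; exact hr.trans_le (ha_ge 0))
    (fun j => by simp only [dist_zero_left, hnorm]; exact (hsucc j).1)
    (fun j => by
      rw [dist_eq_norm, dist_zero_left, hnorm, ← sub_smul, ← sub_div, norm_smul, Real.norm_eq_abs,
        abs_div, abs_of_pos hR, div_mul_cancel₀ _ hR.ne', abs_sub_comm,
        abs_of_nonneg (by linarith [hsucc j])]
      linarith [hsucc j, ha_ge j]) n
  have ha₀ : a 0 = r := by simp [a, hrz]
  simp only [ha₀, ha_n, div_self hR.ne', one_smul] at hchain
  have hn' : (n : ℝ) ≤ 2 * (R / r) - 1 := hn.trans_eq (by field_simp; ring)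
  linarith [mul_le_mul_of_nonneg_left hn' hC₀]

end NormedSpace

section Complex

variable {C₀ : ℝ} {g : ℂ → ℝ}

lemma LocalGreenBound.abs_sub_le_angular (H : LocalGreenBound (0 : ℂ) C₀ g) (hC₀ : 0 ≤ C₀)
    {z w : ℂ} (hz : z ≠ 0) (hzw : ‖z‖ = ‖w‖) : |g z - g w| ≤ 4 * C₀ := by
  set ζ := exp (I * ↑(arg (w / z) / 8))
  have hζ : ‖ζ‖ = 1 := norm_exp_I_mul_ofReal _
  have hnorm : ∀ j : ℕ, ‖z * ζ ^ j‖ = ‖z‖ := fun j => by simp [hζ]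
  have hζ8 : ζ ^ 8 = w / z := by
    have hunit : ‖w / z‖ = 1 := by rw [norm_div, ← hzw, div_self (norm_ne_zero_iff.2 hz)]
    have hpolar := norm_mul_exp_arg_mul_I (w / z)
    rw [hunit, ofReal_one, one_mul] at hpolar
    rw [← exp_nat_mul]
    refine Eq.trans ?_ hpolar
    congr 1
    push_cast
    ring
  have hchain := H.abs_sub_le_of_chain hC₀ (fun j => z * ζ ^ j) (by simpa using hz)
    (fun j => by simp only [dist_zero_left, hnorm, le_refl])
    (fun j => by
      have hθ : |arg (w / z) / 8| ≤ 1 / 2 := by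
        rw [abs_div, abs_of_pos (by norm_num : (0 : ℝ) < 8), div_le_iff₀ (by norm_num)]
        linarith [abs_arg_le_pi (w / z), Real.pi_le_four]
      calc dist (z * ζ ^ j) (z * ζ ^ (j + 1)) = ‖z‖ * ‖ζ - 1‖ := by
            rw [dist_comm, dist_eq_norm, pow_succ, ← mul_assoc, ← mul_sub_one, norm_mul, hnorm]
        _ ≤ ‖z‖ * (1 / 2) := by
            gcongr
            exact (Real.norm_exp_I_mul_ofReal_sub_one_le).trans (by rwa [Real.norm_eq_abs])
        _ = 1 / 2 * dist 0 (z * ζ ^ j) := by rw [dist_zero_left, hnorm, mul_comm]) 8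
  rw [hζ8, mul_div_cancel₀ _ hz, pow_zero, mul_one] at hchain
  linarith

theorem LocalGreenBound.greenBound_complex (H : LocalGreenBound (0 : ℂ) C₀ g) (hC₀ : 0 ≤ C₀) :
    GreenBound (0 : ℂ) (10 * C₀) g := by
  intro z z' hz hz' hle
  rw [dist_zero_left, dist_zero_left] at hle
  rw [dist_zero_left, dist_eq_norm]
  have hr : 0 < ‖z‖ := norm_pos_iff.2 hz
  by_cases hloc : ‖z - z'‖ ≤ 1 / 2 * ‖z‖
  · have := H z z' hz hz' (by rwa [dist_zero_left, dist_eq_norm])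
      (by rwa [dist_zero_left, dist_zero_left])
    rw [dist_zero_left, dist_eq_norm] at this
    refine this.trans (div_le_div_of_nonneg_right ?_ hr.le)
    nlinarith [norm_nonneg (z - z')]
  have hfar : ‖z'‖ ≤ ‖z‖ + ‖z - z'‖ := norm_le_insert z z'
  have hrot := H.abs_sub_le_angular hC₀ hz (w := (‖z‖ / ‖z'‖) • z') (by
    rw [norm_smul_of_nonneg (by positivity), div_mul_cancel₀ _ (norm_ne_zero_iff.2 hz')])
  have hrad := H.abs_sub_le_radial hC₀ hr hle
  have hsum : |g z - g z'| ≤ C₀ * (4 + ‖z'‖ / ‖z‖ - 1 / 2) := by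
    linarith [abs_sub_le (g z) (g ((‖z‖ / ‖z'‖) • z')) (g z')]
  have hratio : ‖z'‖ / ‖z‖ ≤ 1 + ‖z - z'‖ / ‖z‖ := by
    rw [div_le_iff₀ hr, add_mul, div_mul_cancel₀ _ hr.ne']; linarith
  have hhalf : 1 / 2 < ‖z - z'‖ / ‖z‖ := by rw [lt_div_iff₀ hr]; linarith
  rw [mul_div_assoc]
  linarith [mul_le_mul_of_nonneg_left hratio hC₀, mul_le_mul_of_nonneg_left hhalf.le hC₀]

end Complex

theorem stmt_11 :
    ∃ C : ℝ, 0 < C ∧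
      ∀ (x : EuclideanSpace ℝ (Fin 2)) (C₀ : ℝ) (g : EuclideanSpace ℝ (Fin 2) → ℝ),
        0 < C₀ →
        (∀ y y' : EuclideanSpace ℝ (Fin 2), y ≠ x → y' ≠ x →
          dist y y' ≤ 1 / 2 * dist x y → dist x y ≤ dist x y' →
          |g y - g y'| ≤ C₀ * dist y y' / dist x y) →
        ∀ y y' : EuclideanSpace ℝ (Fin 2), y ≠ x → y' ≠ x → dist x y ≤ dist x y' →
          |g y - g y'| ≤ C * C₀ * dist y y' / dist x y := by
  refine ⟨10, by norm_num, fun x C₀ g hC₀ hloc => ?_⟩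
  let φ : ℂ ≃ᵢ EuclideanSpace ℝ (Fin 2) :=
    orthonormalBasisOneI.repr.toIsometryEquiv.trans (IsometryEquiv.addLeft x)
  have hφ : φ 0 = x := by simp [φ]
  exact ((LocalGreenBound.comp_isometryEquiv φ hφ hloc).greenBound_complex hC₀.le
    ).of_comp_isometryEquiv φ hφ
end

section
/- Define G(x,y) := (1/(4π)) log((1 − 2⟨x,y⟩ + |x|²|y|²)/|x−y|²) for x, y ∈ ℝ² with x ≠ y. Then for all x, y, y' in the closed unit disk of ℝ² with y ≠ x, y' ≠ x, and |y−y'| ≤ (1/2)|x−y|, one has |G(x,y) − G(x,y')| ≤ (2/π) |y−y'| / |x−y|. -/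
/-!
In complex notation `1 - 2⟨x, y⟩ + |x|²|y|² = |1 - x̄ y|²`, so
`4π G(x, y) = 2 log |1 - x̄ y| - 2 log |x - y|`. In a real inner product space `|1 - x̄ y|`
becomes `‖|x| y - x / |x|‖` for `x ≠ 0` (`reflectedDist x y`), which dominates `|x - y|` on
the unit ball.
For `|x| ≤ 1` both `y ↦ |1 - x̄ y|` and `y ↦ |x - y|` are 1-Lipschitz and, at `y` and `y'`, at
least `|x - y| / 2`; since `log` is `(1/c)`-Lipschitz on `[c, ∞)`, each logarithm moves by at
most `2|y - y'| / |x - y|`.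
-/

open Real
open scoped RealInnerProductSpace

lemma Real.abs_log_sub_log_le_div {a b c : ℝ} (hc : 0 < c) (ha : c ≤ a) (hb : c ≤ b) :
    |log a - log b| ≤ |a - b| / c := by
  wlog hba : b ≤ a generalizing a b
  · rw [abs_sub_comm, abs_sub_comm a]
    exact this hb ha (le_of_not_ge hba)
  have hb0 : 0 < b := hc.trans_le hb
  have hlog : log a - log b ≤ (a - b) / b := by
    rw [← log_div (by linarith) hb0.ne']
    calc log (a / b) ≤ a / b - 1 := log_le_sub_one_of_pos (div_pos (by linarith) hb0)
      _ = (a - b) / b := by field_simp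
  rw [abs_of_nonneg (sub_nonneg.2 (log_le_log hb0 hba)), abs_of_nonneg (sub_nonneg.2 hba)]
  exact hlog.trans (div_le_div_of_nonneg_left (sub_nonneg.2 hba) hc hb)

lemma Real.abs_log_sub_log_le_two_mul_div {a b d r : ℝ} (hd : 0 < d) (ha : d / 2 ≤ a)
    (hb : d / 2 ≤ b) (hab : |a - b| ≤ r) : |log a - log b| ≤ 2 * r / d := by
  refine (abs_log_sub_log_le_div (half_pos hd) ha hb).trans ?_
  rw [div_div_eq_mul_div, mul_comm]
  gcongr

namespace InnerProductSpace

variable {E : Type*} [NormedAddCommGroup E] [InnerProductSpace ℝ E]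

noncomputable def reflectedDist (x z : E) : ℝ :=
  √(1 - 2 * ⟪x, z⟫ + ‖x‖ ^ 2 * ‖z‖ ^ 2)

lemma one_sub_two_inner_add_sq_mul_sq (x z : E) :
    1 - 2 * ⟪x, z⟫ + ‖x‖ ^ 2 * ‖z‖ ^ 2 = ‖x - z‖ ^ 2 + (1 - ‖x‖ ^ 2) * (1 - ‖z‖ ^ 2) := by
  rw [norm_sub_sq_real]
  ring

lemma sq_norm_sub_le_one_sub_two_inner_add_sq_mul_sq {x z : E} (hx : ‖x‖ ≤ 1) (hz : ‖z‖ ≤ 1) :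
    ‖x - z‖ ^ 2 ≤ 1 - 2 * ⟪x, z⟫ + ‖x‖ ^ 2 * ‖z‖ ^ 2 := by
  rw [one_sub_two_inner_add_sq_mul_sq]
  have : 0 ≤ (1 - ‖x‖ ^ 2) * (1 - ‖z‖ ^ 2) :=
    mul_nonneg (by nlinarith [norm_nonneg x]) (by nlinarith [norm_nonneg z])
  linarith

lemma norm_sub_le_reflectedDist {x z : E} (hx : ‖x‖ ≤ 1) (hz : ‖z‖ ≤ 1) :
    ‖x - z‖ ≤ reflectedDist x z :=
  le_sqrt_of_sq_le (sq_norm_sub_le_one_sub_two_inner_add_sq_mul_sq hx hz)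

lemma reflectedDist_eq_norm {x : E} (hx : x ≠ 0) (z : E) :
    reflectedDist x z = ‖‖x‖ • z - ‖x‖⁻¹ • x‖ := by
  have hnx : ‖x‖ ≠ 0 := norm_ne_zero_iff.2 hx
  rw [reflectedDist, ← sqrt_sq (norm_nonneg (‖x‖ • z - ‖x‖⁻¹ • x)), norm_sub_sq_real,
    norm_smul, norm_smul, real_inner_smul_left, real_inner_smul_right, real_inner_comm,
    norm_inv, norm_norm]
  congr 1
  field_simp
  ring

lemma lipschitzWith_reflectedDist {x : E} (hx : ‖x‖ ≤ 1) :
    LipschitzWith 1 (reflectedDist x) := by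
  rcases eq_or_ne x 0 with rfl | hx0
  · have : reflectedDist (0 : E) = fun _ => 1 := by
      funext z
      simp [reflectedDist]
    exact this ▸ (LipschitzWith.const 1).weaken zero_le_one
  refine LipschitzWith.of_dist_le_mul fun z z' => ?_
  rw [reflectedDist_eq_norm hx0, reflectedDist_eq_norm hx0, NNReal.coe_one, one_mul]
  calc dist ‖‖x‖ • z - ‖x‖⁻¹ • x‖ ‖‖x‖ • z' - ‖x‖⁻¹ • x‖
      ≤ dist (‖x‖ • z - ‖x‖⁻¹ • x) (‖x‖ • z' - ‖x‖⁻¹ • x) :=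
        (dist_norm_norm_le _ _).trans_eq (dist_eq_norm _ _).symm
    _ = ‖x‖ * dist z z' := by rw [dist_sub_right, dist_smul₀, norm_norm]
    _ ≤ dist z z' := mul_le_of_le_one_left dist_nonneg hx

lemma log_div_norm_sub_sq_eq {x y : E} (hx : ‖x‖ ≤ 1) (hy : ‖y‖ ≤ 1) (hxy : x ≠ y) :
    1 / (4 * π) * log ((1 - 2 * ⟪x, y⟫ + ‖x‖ ^ 2 * ‖y‖ ^ 2) / ‖x - y‖ ^ 2) =
      (log (reflectedDist x y) - log ‖x - y‖) / (2 * π) := by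
  have hd : 0 < ‖x - y‖ := norm_sub_pos_iff.2 hxy
  have hm : 0 < reflectedDist x y := hd.trans_le (norm_sub_le_reflectedDist hx hy)
  have hQ : 1 - 2 * ⟪x, y⟫ + ‖x‖ ^ 2 * ‖y‖ ^ 2 = reflectedDist x y ^ 2 := by
    rw [reflectedDist, sq_sqrt
      ((sq_nonneg _).trans (sq_norm_sub_le_one_sub_two_inner_add_sq_mul_sq hx hy))]
  rw [hQ, log_div (by positivity) (by positivity), log_pow, log_pow]
  field_simp
  ring

end InnerProductSpace

open InnerProductSpace

theorem stmt_17 (G : EuclideanSpace ℝ (Fin 2) → EuclideanSpace ℝ (Fin 2) → ℝ)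
    (hG : ∀ x y : EuclideanSpace ℝ (Fin 2), x ≠ y →
      G x y = 1 / (4 * π) *
        Real.log ((1 - 2 * ⟪x, y⟫ + ‖x‖ ^ 2 * ‖y‖ ^ 2) / ‖x - y‖ ^ 2)) :
    ∀ x y y' : EuclideanSpace ℝ (Fin 2), ‖x‖ ≤ 1 → ‖y‖ ≤ 1 → ‖y'‖ ≤ 1 →
      y ≠ x → y' ≠ x → ‖y - y'‖ ≤ 1 / 2 * ‖x - y‖ →
      |G x y - G x y'| ≤ 2 / π * ‖y - y'‖ / ‖x - y‖ := by
  intro x y y' hx hy hy' hyx hy'x hyy'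
  have hd : 0 < ‖x - y‖ := norm_sub_pos_iff.2 hyx.symm
  have hd' : ‖x - y‖ / 2 ≤ ‖x - y'‖ := by
    linarith [norm_sub_le_norm_sub_add_norm_sub x y' y, norm_sub_rev y' y]
  have hlog_refl :
      |log (reflectedDist x y) - log (reflectedDist x y')| ≤ 2 * ‖y - y'‖ / ‖x - y‖ := by
    refine abs_log_sub_log_le_two_mul_div hd ?_ (hd'.trans (norm_sub_le_reflectedDist hx hy')) ?_
    · linarith [norm_sub_le_reflectedDist hx hy]
    · simpa [dist_eq_norm] using (lipschitzWith_reflectedDist hx).dist_le_mul y y'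
  have hlog_norm : |log ‖x - y‖ - log ‖x - y'‖| ≤ 2 * ‖y - y'‖ / ‖x - y‖ :=
    abs_log_sub_log_le_two_mul_div hd (by linarith) hd'
      (by simpa [norm_sub_rev y y'] using abs_norm_sub_norm_le (x - y) (x - y'))
  rw [hG x y hyx.symm, hG x y' hy'x.symm, log_div_norm_sub_sq_eq hx hy hyx.symm,
    log_div_norm_sub_sq_eq hx hy' hy'x.symm, ← sub_div, abs_div,
    abs_of_pos (by positivity : (0 : ℝ) < 2 * π), div_le_iff₀ (by positivity)]
  calc |log (reflectedDist x y) - log ‖x - y‖ - (log (reflectedDist x y') - log ‖x - y'‖)|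
      ≤ |log (reflectedDist x y) - log (reflectedDist x y')|
          + |log ‖x - y‖ - log ‖x - y'‖| := by
        rw [sub_sub_sub_comm]
        exact abs_sub _ _
    _ ≤ 2 * ‖y - y'‖ / ‖x - y‖ + 2 * ‖y - y'‖ / ‖x - y‖ := add_le_add hlog_refl hlog_norm
    _ = 2 / π * ‖y - y'‖ / ‖x - y‖ * (2 * π) := by
        field_simp
        ring
end
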